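/- Let m, k be integers with 1 ≤ k < m, and let ḡ_{(m,k)} be the associated function on 𝔽_3^m. Then, as integers: (a) for u ∈ 𝔽_3 \ {0} and v ∈ 𝔽_3^m with wt(v) = i ≥ 1, the Hamming weight of the codeword c_{u,v} of C_{ḡ_{(m,k)}} equals 3^m - 3^{m-1} - Ψ_k(i, m); (b) for u ∈ 𝔽_3 \ {0} and v = 0, the Hamming weight of c_{u,0} equals 3^m - Σ_{j=0}^{k} 2^j·C(m, j); (c) for u = 0 and v ≠ 0, the Hamming weight of c_{0,v} equals 3^m - 3^{m-1}. -/

import Mathlib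

open Finset

/-- The function `ḡ_{(m,k)} : 𝔽_3^m → 𝔽_3`: `1` if `wt(x) > k`, `0` if `wt(x) ≤ k`. -/
def gbar {m : ℕ} (k : ℕ) (x : Fin m → ZMod 3) : ZMod 3 :=
  if k < hammingNorm x then 1 else 0

/-- The ternary Krawtchouk polynomial
`K_t(i,m) = Σ_{j=0}^{t} (-1)^j·2^{t-j}·C(i,j)·C(m-i,t-j)`. -/
def kraw (t i m : ℕ) : ℤ :=
  ∑ j ∈ Finset.range (t + 1),
    (-1 : ℤ) ^ j * 2 ^ (t - j) * (i.choose j : ℤ) * ((m - i).choose (t - j) : ℤ)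

/-- The Lloyd polynomial `Ψ_k(i,m) = Σ_{t=0}^{k} K_t(i,m)`. -/
def lloyd (k i m : ℕ) : ℤ := ∑ t ∈ Finset.range (k + 1), kraw t i m

/-- The Hamming weight of the codeword `c_{u,v}` of the code `C_h`, i.e. the number
of `x ∈ 𝔽_3^m \ {0}` with `u·h(x) + v·x ≠ 0`. -/
def cwWeight {m : ℕ} (h : (Fin m → ZMod 3) → ZMod 3)
    (u : ZMod 3) (v : Fin m → ZMod 3) : ℕ :=
  (Finset.univ.filter fun x : Fin m → ZMod 3 =>
    x ≠ 0 ∧ u * h x + ∑ j, v j * x j ≠ 0).card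

/-!
For `u ≠ 0` the zeros of `c_{u,v}` are the points of weight `≤ k` on the hyperplane `v·x = 0`
together with the points of weight `> k` on `v·x = -u`. Scaling by `-u` and the fact that every
affine hyperplane has `3^{m-1}` points reduce the count to `N₀ - N₁`, where `N_a` is the number of
points of the Hamming ball of radius `k` with `v·x = a`. On the sphere of radius `t`, this difference
is the Krawtchouk value `K_t(wt v, m)`: splitting off the first coordinate of `v` yields exactly the
two Pascal-type recurrences of `K_t`. Taking `v = 0` gives the size `Σ 2^j C(m,j)` of the ball.
-/

lemma hammingNorm_cons {α : Type*} [Zero α] [DecidableEq α] {m : ℕ} (b : α) (x : Fin m → α) :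
    hammingNorm (Fin.cons b x : Fin (m + 1) → α) = (if b = 0 then 0 else 1) + hammingNorm x := by
  simp [hammingNorm, card_filter, Fin.sum_univ_succ]

lemma card_filter_fin_succ {α : Type*} [Fintype α] [DecidableEq α] {m : ℕ}
    (P : (Fin (m + 1) → α) → Prop) [DecidablePred P] :
    #{x | P x} = ∑ b, #{x : Fin m → α | P (Fin.cons b x)} := by
  simp_rw [card_filter]
  rw [← Fintype.sum_equiv (Fin.consEquiv fun _ => α)
    (fun p => if P (Fin.cons p.1 p.2) then 1 else 0) _ fun _ => rfl, Fintype.sum_prod_type]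

lemma card_filter_eq_card_and_add_card_not_and {α : Type*} [Fintype α] (p q : α → Prop)
    [DecidablePred p] [DecidablePred q] :
    #{x | q x} = #{x | p x ∧ q x} + #{x | ¬p x ∧ q x} := by
  rw [← card_filter_add_card_filter_not p, filter_filter, filter_filter]
  simp only [and_comm]

section FiniteField

variable {F ι : Type*} [Field F] [Fintype F] [DecidableEq F] [Fintype ι] [DecidableEq ι]

lemma card_dotProduct_eq {v : ι → F} (hv : v ≠ 0) (a : F) :
    #{x : ι → F | v ⬝ᵥ x = a} = Fintype.card F ^ (Fintype.card ι - 1) := by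
  obtain ⟨j, hj⟩ := Function.ne_iff.mp hv
  let f : (ι → F) →+ F := AddMonoidHom.mk' (v ⬝ᵥ ·) (dotProduct_add v)
  have hsurj (b : F) : b ∈ Set.range f :=
    ⟨Pi.single j (b / v j), by simp [f, dotProduct_single, mul_div_cancel₀ _ hj]⟩
  have hfiber (b : F) : #{x | v ⬝ᵥ x = b} = #{x | v ⬝ᵥ x = a} :=
    AddMonoidHom.card_fiber_eq_of_mem_range f (hsurj b) (hsurj a)
  have htotal : Fintype.card F ^ Fintype.card ι = Fintype.card F * #{x | v ⬝ᵥ x = a} := by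
    rw [← Fintype.card_fun, ← card_univ,
      card_eq_sum_card_fiberwise (f := (v ⬝ᵥ ·)) (t := univ) (by simp)]
    simp [hfiber]
  have hι : Fintype.card ι = Fintype.card ι - 1 + 1 :=
    (Nat.succ_pred_eq_of_pos (Fintype.card_pos_iff.mpr ⟨j⟩)).symm
  rw [hι, pow_succ'] at htotal
  exact (Nat.eq_of_mul_eq_mul_left Fintype.card_pos htotal).symm

lemma card_hammingNorm_dotProduct_eq_mul (p : ℕ → Prop) [DecidablePred p] (v : ι → F) {c : F}
    (hc : c ≠ 0) (a : F) :
    #{x : ι → F | p (hammingNorm x) ∧ v ⬝ᵥ x = c * a}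
      = #{x : ι → F | p (hammingNorm x) ∧ v ⬝ᵥ x = a} := by
  have hnorm (d : F) (hd : d ≠ 0) (x : ι → F) : hammingNorm (d • x) = hammingNorm x :=
    hammingNorm_smul (fun _ => IsSMulRegular.of_ne_zero hd) x
  refine card_nbij' (c⁻¹ • ·) (c • ·) ?_ ?_ ?_ ?_
  · intro x hx
    simp only [coe_filter, mem_univ, true_and, Set.mem_ofPred_eq, dotProduct_smul] at hx ⊢
    rw [hnorm _ (inv_ne_zero hc), hx.2, smul_eq_mul, inv_mul_cancel_left₀ hc]
    exact ⟨hx.1, rfl⟩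
  · intro x hx
    simp only [coe_filter, mem_univ, true_and, Set.mem_ofPred_eq, dotProduct_smul] at hx ⊢
    rw [hnorm _ hc, hx.2, smul_eq_mul]
    exact ⟨hx.1, rfl⟩
  · intro x _
    simp [smul_smul, hc]
  · intro x _
    simp [smul_smul, hc]

end FiniteField

lemma kraw_zero (i m : ℕ) : kraw 0 i m = 1 := by simp [kraw]

lemma kraw_weight_zero (t m : ℕ) : kraw t 0 m = 2 ^ t * m.choose t := by
  rw [kraw, sum_range_succ']
  simp [Nat.choose_zero_succ]

lemma kraw_succ_of_le {i m : ℕ} (hi : i ≤ m) (t : ℕ) :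
    kraw (t + 1) i (m + 1) = kraw (t + 1) i m + 2 * kraw t i m := by
  rw [kraw, kraw, kraw, sum_range_succ, sum_range_succ (n := t + 1), mul_sum, add_right_comm,
    ← sum_add_distrib]
  congr 1
  · refine sum_congr rfl fun j hj => ?_
    rw [mem_range] at hj
    rw [show t + 1 - j = t - j + 1 by omega, show m + 1 - i = m - i + 1 by omega,
      Nat.choose_succ_succ]
    push_cast
    ring
  · simp

lemma kraw_succ_succ_succ (t i m : ℕ) :
    kraw (t + 1) (i + 1) (m + 1) = kraw (t + 1) i m - kraw t i m := by
  rw [kraw, kraw, kraw, sum_range_succ' _ (t + 1), sum_range_succ' _ (t + 1),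
    Nat.add_sub_add_right, add_sub_right_comm, ← sum_sub_distrib]
  congr 1
  · refine sum_congr rfl fun j _ => ?_
    rw [Nat.add_sub_add_right, Nat.choose_succ_succ]
    push_cast
    ring
  · simp

section

variable {m : ℕ}

def sphereDotCount (t : ℕ) (v : Fin m → ZMod 3) (a : ZMod 3) : ℕ :=
  #{x : Fin m → ZMod 3 | hammingNorm x = t ∧ v ⬝ᵥ x = a}

lemma sphereDotCount_zero (v : Fin m → ZMod 3) (a : ZMod 3) :
    sphereDotCount 0 v a = if a = 0 then 1 else 0 := by
  simp only [sphereDotCount, hammingNorm_eq_zero]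
  split_ifs with ha
  · rw [← card_singleton (0 : Fin m → ZMod 3)]
    congr 1
    ext x
    simp only [mem_filter, mem_univ, true_and, mem_singleton, and_iff_left_iff_imp]
    rintro rfl
    simp [ha]
  · simp [Ne.symm ha]

lemma sphereDotCount_fin_zero (t : ℕ) (v : Fin 0 → ZMod 3) (a : ZMod 3) :
    sphereDotCount (t + 1) v a = 0 := by
  simp [sphereDotCount, hammingNorm]

lemma sphereDotCount_succ_cons (t : ℕ) (c : ZMod 3) (w : Fin m → ZMod 3) (a : ZMod 3) :
    sphereDotCount (t + 1) (Fin.cons c w) a = sphereDotCount (t + 1) w a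
      + sphereDotCount t w (a - c) + sphereDotCount t w (a - 2 * c) := by
  rw [sphereDotCount, card_filter_fin_succ,
    show ∀ f : ZMod 3 → ℕ, ∑ b, f b = f 0 + f 1 + f 2 from Fin.sum_univ_three]
  have hdot : ∀ b x, (Fin.cons c w : Fin (m + 1) → ZMod 3) ⬝ᵥ Fin.cons b x = c * b + w ⬝ᵥ x :=
    fun b x => Matrix.cons_dotProduct_cons c w b x
  simp only [hammingNorm_cons, hdot]
  have h2 : (2 : ZMod 3) ≠ 0 := by decide
  congr 1
  congr 1
  all_goals
    refine congrArg card (filter_congr fun x _ => ?_)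
    simp [h2, eq_sub_iff_add_eq, add_comm _ (w ⬝ᵥ x), add_comm 1, mul_comm c]

theorem sphereDotCount_zero_sub_one (t : ℕ) (v : Fin m → ZMod 3) :
    (sphereDotCount t v 0 : ℤ) - sphereDotCount t v 1 = kraw t (hammingNorm v) m := by
  induction m generalizing t with
  | zero =>
    rcases t with _ | t
    · simp [sphereDotCount_zero, kraw_zero]
    · simp [sphereDotCount_fin_zero, hammingNorm, kraw_weight_zero]
  | succ m ih =>
    rcases t with _ | t
    · simp [sphereDotCount_zero, kraw_zero]
    obtain ⟨c, w, rfl⟩ : ∃ c w, v = Fin.cons c w := ⟨v 0, Fin.tail v, (Fin.cons_self_tail v).symm⟩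
    have hw : hammingNorm w ≤ m := hammingNorm_le_card_fintype.trans (by simp)
    have ih₁ := ih (t + 1) w
    have ih₀ := ih t w
    simp only [sphereDotCount_succ_cons, hammingNorm_cons]
    push_cast
    obtain rfl | rfl | rfl : c = 0 ∨ c = 1 ∨ c = 2 := by revert c; decide
    · simp only [sub_zero, mul_zero, if_pos, zero_add, kraw_succ_of_le hw]
      linarith
    all_goals
      rw [if_neg (by decide), add_comm 1, kraw_succ_succ_succ]
      reduce_mod_char
      linarith

lemma card_hammingNorm_le_dotProduct_eq (k : ℕ) (v : Fin m → ZMod 3) (a : ZMod 3) :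
    #{x : Fin m → ZMod 3 | hammingNorm x ≤ k ∧ v ⬝ᵥ x = a}
      = ∑ t ∈ range (k + 1), sphereDotCount t v a := by
  rw [card_eq_sum_card_fiberwise (f := hammingNorm) (t := range (k + 1))
    fun x hx => by simpa [Nat.lt_succ_iff] using (mem_filter.mp hx).2.1]
  refine sum_congr rfl fun t ht => ?_
  rw [filter_filter, sphereDotCount]
  congr 1
  refine filter_congr fun x _ => ?_
  constructor
  · exact fun ⟨⟨_, h⟩, ht⟩ => ⟨ht, h⟩
  · rintro ⟨rfl, h⟩
    exact ⟨⟨Nat.lt_succ_iff.mp (mem_range.mp ht), h⟩, rfl⟩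

lemma lloyd_eq_card_sub_card (k : ℕ) (v : Fin m → ZMod 3) :
    lloyd k (hammingNorm v) m
      = (#{x : Fin m → ZMod 3 | hammingNorm x ≤ k ∧ v ⬝ᵥ x = 0} : ℤ)
        - #{x : Fin m → ZMod 3 | hammingNorm x ≤ k ∧ v ⬝ᵥ x = 1} := by
  simp only [card_hammingNorm_le_dotProduct_eq, lloyd, Nat.cast_sum, ← sum_sub_distrib,
    sphereDotCount_zero_sub_one]

lemma card_hammingNorm_le (k : ℕ) :
    (#{x : Fin m → ZMod 3 | hammingNorm x ≤ k} : ℤ)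
      = ∑ j ∈ range (k + 1), 2 ^ j * (m.choose j : ℤ) := by
  have h := lloyd_eq_card_sub_card k (0 : Fin m → ZMod 3)
  simp only [zero_dotProduct, and_true, zero_ne_one, and_false, filter_false, card_empty,
    Nat.cast_zero, sub_zero, hammingNorm_zero] at h
  simp [← h, lloyd, kraw_weight_zero]

lemma cwWeight_eq_sub_card {h : (Fin m → ZMod 3) → ZMod 3} {u : ZMod 3} (h0 : u * h 0 = 0)
    (v : Fin m → ZMod 3) :
    (cwWeight h u v : ℤ) = 3 ^ m - #{x : Fin m → ZMod 3 | u * h x + v ⬝ᵥ x = 0} := by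
  have hweight : cwWeight h u v = #{x : Fin m → ZMod 3 | ¬u * h x + v ⬝ᵥ x = 0} := by
    refine congrArg card (filter_congr fun x _ => and_iff_right_of_imp ?_)
    rintro hx rfl
    simp [h0] at hx
  have htotal := card_filter_add_card_filter_not (s := univ)
    fun x : Fin m → ZMod 3 => u * h x + v ⬝ᵥ x = 0
  rw [card_univ, Fintype.card_fun, ZMod.card, Fintype.card_fin] at htotal
  rw [hweight, eq_sub_iff_add_eq']
  exact_mod_cast htotal

lemma gbar_zero (k : ℕ) : gbar k (0 : Fin m → ZMod 3) = 0 := by simp [gbar]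

lemma card_dotProduct_eq_zmod_three {v : Fin m → ZMod 3} (hv : v ≠ 0) (a : ZMod 3) :
    #{x : Fin m → ZMod 3 | v ⬝ᵥ x = a} = 3 ^ (m - 1) := by
  rw [card_dotProduct_eq hv, ZMod.card, Fintype.card_fin]

lemma cwWeight_gbar_of_ne_zero (k : ℕ) {u : ZMod 3} (hu : u ≠ 0) {v : Fin m → ZMod 3}
    (hv : v ≠ 0) :
    (cwWeight (gbar k) u v : ℤ) = 3 ^ m - 3 ^ (m - 1) - lloyd k (hammingNorm v) m := by
  have hsplit : #{x : Fin m → ZMod 3 | u * gbar k x + v ⬝ᵥ x = 0}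
      = #{x : Fin m → ZMod 3 | hammingNorm x ≤ k ∧ v ⬝ᵥ x = 0}
        + #{x : Fin m → ZMod 3 | ¬hammingNorm x ≤ k ∧ v ⬝ᵥ x = -u * 1} := by
    rw [card_filter_eq_card_and_add_card_not_and (fun x => hammingNorm x ≤ k)]
    congr 1 <;> refine congrArg card (filter_congr fun x _ => ?_) <;> unfold gbar <;>
      split_ifs with hx <;> simp_all [eq_neg_iff_add_eq_zero, add_comm]
  have hscale := card_hammingNorm_dotProduct_eq_mul (fun n => ¬n ≤ k) v (neg_ne_zero.mpr hu) 1
  have hfiber := card_filter_eq_card_and_add_card_not_and (fun x => hammingNorm x ≤ k)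
    fun x : Fin m → ZMod 3 => v ⬝ᵥ x = 1
  rw [card_dotProduct_eq_zmod_three hv] at hfiber
  rw [cwWeight_eq_sub_card (by rw [gbar_zero, mul_zero]), lloyd_eq_card_sub_card, hsplit, hscale]
  have hfiberℤ := congrArg (Nat.cast : ℕ → ℤ) hfiber
  push_cast at hfiberℤ ⊢
  linarith

lemma cwWeight_gbar_zero_right (k : ℕ) {u : ZMod 3} (hu : u ≠ 0) :
    (cwWeight (gbar (m := m) k) u 0 : ℤ)
      = 3 ^ m - ∑ j ∈ range (k + 1), 2 ^ j * (m.choose j : ℤ) := by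
  rw [cwWeight_eq_sub_card (by rw [gbar_zero, mul_zero]), ← card_hammingNorm_le k]
  congr 3
  refine filter_congr fun x _ => ?_
  simp [gbar, hu]

lemma cwWeight_zero_left (h : (Fin m → ZMod 3) → ZMod 3) {v : Fin m → ZMod 3} (hv : v ≠ 0) :
    (cwWeight h 0 v : ℤ) = 3 ^ m - 3 ^ (m - 1) := by
  simp [cwWeight_eq_sub_card (zero_mul _), card_dotProduct_eq_zmod_three hv]

end

theorem stmt_15_general (m k : ℕ) :
    (∀ u : ZMod 3, u ≠ 0 → ∀ (v : Fin m → ZMod 3) (i : ℕ), hammingNorm v = i → 1 ≤ i →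
      (cwWeight (gbar (m := m) k) u v : ℤ) = 3 ^ m - 3 ^ (m - 1) - lloyd k i m)
    ∧ (∀ u : ZMod 3, u ≠ 0 →
      (cwWeight (gbar (m := m) k) u 0 : ℤ)
        = 3 ^ m - ∑ j ∈ Finset.range (k + 1), 2 ^ j * (m.choose j : ℤ))
    ∧ (∀ v : Fin m → ZMod 3, v ≠ 0 →
      (cwWeight (gbar (m := m) k) 0 v : ℤ) = 3 ^ m - 3 ^ (m - 1)) := by
  refine ⟨fun u hu v i hv hi => ?_, fun u hu => cwWeight_gbar_zero_right k hu,
    fun v hv => cwWeight_zero_left _ hv⟩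
  subst hv
  exact cwWeight_gbar_of_ne_zero k hu (hammingNorm_pos_iff.mp hi)

/-- For `1 ≤ k < m`, in the code `C_{ḡ_{(m,k)}}`:
(a) for `u ≠ 0` and `wt(v) = i ≥ 1`, `wt(c_{u,v}) = 3^m - 3^{m-1} - Ψ_k(i,m)`;
(b) for `u ≠ 0`, `wt(c_{u,0}) = 3^m - Σ_{j=0}^{k} 2^j·C(m,j)`;
(c) for `v ≠ 0`, `wt(c_{0,v}) = 3^m - 3^{m-1}`. -/
theorem stmt_15 (m k : ℕ) (hk1 : 1 ≤ k) (hkm : k < m) :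
    (∀ u : ZMod 3, u ≠ 0 → ∀ (v : Fin m → ZMod 3) (i : ℕ), hammingNorm v = i → 1 ≤ i →
      (cwWeight (gbar (m := m) k) u v : ℤ) = 3 ^ m - 3 ^ (m - 1) - lloyd k i m)
    ∧ (∀ u : ZMod 3, u ≠ 0 →
      (cwWeight (gbar (m := m) k) u 0 : ℤ)
        = 3 ^ m - ∑ j ∈ Finset.range (k + 1), 2 ^ j * (m.choose j : ℤ))
    ∧ (∀ v : Fin m → ZMod 3, v ≠ 0 →
      (cwWeight (gbar (m := m) k) 0 v : ℤ) = 3 ^ m - 3 ^ (m - 1)) :=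
  stmt_15_general m k
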